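/- arXiv:2403.13546 — 2 statements merged into one kernel-verified Lean document; each statement's English description precedes it below -/
import Mathlib

section
/- Let φ be a smooth solution on I = (0, L) of φ_t = φ_s × φ_ss + x^R_s × φ_ss + φ_s × x^R_ss with boundary conditions φ_s(0,t) = φ_s(L,t) = 0, where x^R(s,t) = (R cos(s/R), R sin(s/R), t/R). Then the quantity E(φ(t)) = ‖φ_ss(t)‖²_{L²(I)} − (1/R²)‖φ_s(t)‖²_{L²(I)} is constant in t. -/
open MeasureTheory RealInnerProductSpace

noncomputable section

abbrev E3 := EuclideanSpace ℝ (Fin 3)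

/-- Cross product on `ℝ³`. -/
def cross (u v : E3) : E3 :=
  (WithLp.equiv 2 (Fin 3 → ℝ)).symm
    ![u 1 * v 2 - u 2 * v 1, u 2 * v 0 - u 0 * v 2, u 0 * v 1 - u 1 * v 0]

/-- Partial derivative in the first (space) variable. -/
def pd1 (f : ℝ → ℝ → E3) (s t : ℝ) : E3 := deriv (fun s' => f s' t) s

/-- Partial derivative in the second (time) variable. -/
def pd2 (f : ℝ → ℝ → E3) (s t : ℝ) : E3 := deriv (fun t' => f s t') t

/-- The arc-shaped filament. -/
def xR (R : ℝ) (s t : ℝ) : E3 :=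
  (WithLp.equiv 2 (Fin 3 → ℝ)).symm ![R * Real.cos (s / R), R * Real.sin (s / R), t / R]

/-! ### Auxiliary lemmas -/

lemma hasDerivAt_slice1 {f : ℝ → ℝ → E3}
    (hf : ContDiff ℝ (⊤ : ℕ∞) (fun p : ℝ × ℝ => f p.1 p.2)) (s t : ℝ) :
    HasDerivAt (fun s' => f s' t) (pd1 f s t) s := by
  have hdiff : DifferentiableAt ℝ (fun s' => f s' t) s := by
    have h1 : DifferentiableAt ℝ (fun p : ℝ × ℝ => f p.1 p.2) (s, t) :=
      (hf.differentiable (by simp)).differentiableAt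
    exact h1.comp s ((hasDerivAt_id' (x := s)).prodMk (hasDerivAt_const s t)).differentiableAt
  exact hdiff.hasDerivAt

lemma hasDerivAt_slice2 {f : ℝ → ℝ → E3}
    (hf : ContDiff ℝ (⊤ : ℕ∞) (fun p : ℝ × ℝ => f p.1 p.2)) (s t : ℝ) :
    HasDerivAt (fun t' => f s t') (pd2 f s t) t := by
  have hdiff : DifferentiableAt ℝ (fun t' => f s t') t := by
    have h1 : DifferentiableAt ℝ (fun p : ℝ × ℝ => f p.1 p.2) (s, t) :=
      (hf.differentiable (by simp)).differentiableAt
    exact h1.comp t ((differentiableAt_const s).prodMk differentiableAt_id)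
  exact hdiff.hasDerivAt

lemma pd1_eq_fderiv {f : ℝ → ℝ → E3}
    (hf : ContDiff ℝ (⊤ : ℕ∞) (fun p : ℝ × ℝ => f p.1 p.2)) (s t : ℝ) :
    pd1 f s t = fderiv ℝ (fun p : ℝ × ℝ => f p.1 p.2) (s, t) (1, 0) := by
  have h1 : HasDerivAt (fun s' => f s' t)
      (fderiv ℝ (fun p : ℝ × ℝ => f p.1 p.2) (s, t) (1, 0)) s := by
    have := ((hf.differentiable (by simp) (s, t)).hasFDerivAt).comp_hasDerivAt s
      ((hasDerivAt_id' (x := s)).prodMk (hasDerivAt_const s t))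
    exact this
  exact h1.deriv.symm ▸ rfl

lemma pd2_eq_fderiv {f : ℝ → ℝ → E3}
    (hf : ContDiff ℝ (⊤ : ℕ∞) (fun p : ℝ × ℝ => f p.1 p.2)) (s t : ℝ) :
    pd2 f s t = fderiv ℝ (fun p : ℝ × ℝ => f p.1 p.2) (s, t) (0, 1) := by
  have h1 : HasDerivAt (fun t' => f s t')
      (fderiv ℝ (fun p : ℝ × ℝ => f p.1 p.2) (s, t) (0, 1)) t :=
    ((hf.differentiable (by simp) (s, t)).hasFDerivAt).comp_hasDerivAt t
      ((hasDerivAt_const t s).prodMk (hasDerivAt_id t))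
  exact h1.deriv.symm ▸ rfl

lemma contDiff_pd1 {f : ℝ → ℝ → E3}
    (hf : ContDiff ℝ (⊤ : ℕ∞) (fun p : ℝ × ℝ => f p.1 p.2)) :
    ContDiff ℝ (⊤ : ℕ∞) (fun p : ℝ × ℝ => pd1 f p.1 p.2) := by
  have h1 : ContDiff ℝ (⊤ : ℕ∞)
      (fun p : ℝ × ℝ => fderiv ℝ (fun q : ℝ × ℝ => f q.1 q.2) p (1, 0)) :=
    (hf.fderiv_right (by simp)).clm_apply contDiff_const
  have he : (fun p : ℝ × ℝ => pd1 f p.1 p.2)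
      = fun p : ℝ × ℝ => fderiv ℝ (fun q : ℝ × ℝ => f q.1 q.2) p (1, 0) :=
    funext fun p => pd1_eq_fderiv hf p.1 p.2
  rw [he]; exact h1

lemma contDiff_pd2 {f : ℝ → ℝ → E3}
    (hf : ContDiff ℝ (⊤ : ℕ∞) (fun p : ℝ × ℝ => f p.1 p.2)) :
    ContDiff ℝ (⊤ : ℕ∞) (fun p : ℝ × ℝ => pd2 f p.1 p.2) := by
  have h1 : ContDiff ℝ (⊤ : ℕ∞)
      (fun p : ℝ × ℝ => fderiv ℝ (fun q : ℝ × ℝ => f q.1 q.2) p (0, 1)) :=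
    (hf.fderiv_right (by simp)).clm_apply contDiff_const
  have he : (fun p : ℝ × ℝ => pd2 f p.1 p.2)
      = fun p : ℝ × ℝ => fderiv ℝ (fun q : ℝ × ℝ => f q.1 q.2) p (0, 1) :=
    funext fun p => pd2_eq_fderiv hf p.1 p.2
  rw [he]; exact h1

/-- Clairaut's theorem for smooth functions. -/
lemma pd_comm {f : ℝ → ℝ → E3}
    (hf : ContDiff ℝ (⊤ : ℕ∞) (fun p : ℝ × ℝ => f p.1 p.2)) (s t : ℝ) :
    pd1 (pd2 f) s t = pd2 (pd1 f) s t := by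
  set F : ℝ × ℝ → E3 := fun p => f p.1 p.2 with hF
  set F' : ℝ × ℝ → (ℝ × ℝ) →L[ℝ] E3 := fderiv ℝ F with hF'
  have hdF : ContDiff ℝ (⊤ : ℕ∞) F' := hf.fderiv_right (by simp)
  have hdiffF' : DifferentiableAt ℝ F' (s, t) := (hdF.differentiable (by simp)).differentiableAt
  have hsym : ∀ v w : ℝ × ℝ,
      fderiv ℝ F' (s, t) v w = fderiv ℝ F' (s, t) w v := by
    intro v w
    exact second_derivative_symmetric
      (fun y => ((hf.differentiable (by simp)) y).hasFDerivAt) hdiffF'.hasFDerivAt v w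
  have h1 : pd1 (pd2 f) s t = fderiv ℝ F' (s, t) (1, 0) (0, 1) := by
    have hc : HasDerivAt (fun s' => F' (s', t)) (fderiv ℝ F' (s, t) (1, 0)) s :=
      hdiffF'.hasFDerivAt.comp_hasDerivAt s ((hasDerivAt_id s).prodMk (hasDerivAt_const s t))
    have happ : HasDerivAt (fun s' => F' (s', t) (0, 1))
        (fderiv ℝ F' (s, t) (1, 0) (0, 1)) s := by
      simpa using hc.clm_apply (hasDerivAt_const s ((0,1) : ℝ × ℝ))
    have he : (fun s' => pd2 f s' t) = fun s' => F' (s', t) (0, 1) :=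
      funext fun s' => pd2_eq_fderiv hf s' t
    rw [pd1, he, happ.deriv]
  have h2 : pd2 (pd1 f) s t = fderiv ℝ F' (s, t) (0, 1) (1, 0) := by
    have hc : HasDerivAt (fun t' => F' (s, t')) (fderiv ℝ F' (s, t) (0, 1)) t :=
      hdiffF'.hasFDerivAt.comp_hasDerivAt t ((hasDerivAt_const t s).prodMk (hasDerivAt_id t))
    have happ : HasDerivAt (fun t' => F' (s, t') (1, 0))
        (fderiv ℝ F' (s, t) (0, 1) (1, 0)) t := by
      simpa using hc.clm_apply (hasDerivAt_const t ((1,0) : ℝ × ℝ))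
    have he : (fun t' => pd1 f s t') = fun t' => F' (s, t') (1, 0) :=
      funext fun t' => pd1_eq_fderiv hf s t'
    rw [pd2, he, happ.deriv]
  rw [h1, h2, hsym]

/-! ### Cross product lemmas -/

def crossR (u : E3) : E3 →L[ℝ] E3 :=
  LinearMap.toContinuousLinearMap
    { toFun := fun v => cross u v
      map_add' := by intro a b; ext i; fin_cases i <;> simp [cross] <;> ring
      map_smul' := by intro c a; ext i; fin_cases i <;> simp [cross] <;> ring }

def crossL : E3 →L[ℝ] E3 →L[ℝ] E3 :=
  LinearMap.toContinuousLinearMap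
    { toFun := crossR
      map_add' := by
        intro a b; ext v i
        fin_cases i <;> simp [crossR, cross] <;> ring
      map_smul' := by
        intro c a; ext v i
        fin_cases i <;> simp [crossR, cross] <;> ring }

@[simp] lemma crossL_apply (u v : E3) : crossL u v = cross u v := rfl

lemma HasDerivAt.cross' {f g : ℝ → E3} {f' g' : E3} {x : ℝ}
    (hf : HasDerivAt f f' x) (hg : HasDerivAt g g' x) :
    HasDerivAt (fun x => cross (f x) (g x)) (cross f' (g x) + cross (f x) g') x := by
  have h1 : HasDerivAt (fun x => crossL (f x)) (crossL f') x :=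
    (crossL.hasFDerivAt).comp_hasDerivAt x hf
  simpa using h1.clm_apply hg

lemma crossE3_self (u : E3) : cross u u = 0 := by
  ext i; fin_cases i <;> simp [cross] <;> ring

lemma crossE3_anticomm (u v : E3) : cross u v = - cross v u := by
  ext i; fin_cases i <;> simp [cross] <;> ring

lemma cross_smul_right (c : ℝ) (u v : E3) : cross u (c • v) = c • cross u v := by
  ext i; fin_cases i <;> simp [cross] <;> ring

lemma inner_cross_left (u v : E3) : ⟪u, cross u v⟫ = 0 := by
  simp [cross, PiLp.inner_apply, Fin.sum_univ_three]; ring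

lemma inner_cross_right (u v : E3) : ⟪v, cross u v⟫ = 0 := by
  simp [cross, PiLp.inner_apply, Fin.sum_univ_three]; ring

lemma inner_cross_cyclic (u v w : E3) : ⟪u, cross v w⟫ = ⟪w, cross u v⟫ := by
  simp [cross, PiLp.inner_apply, Fin.sum_univ_three]; ring

/-! ### Derivatives of the filament -/

def aR (R s : ℝ) : E3 :=
  (WithLp.equiv 2 (Fin 3 → ℝ)).symm ![-Real.sin (s / R), Real.cos (s / R), 0]
def bR (R s : ℝ) : E3 :=
  (WithLp.equiv 2 (Fin 3 → ℝ)).symm ![-(Real.cos (s / R)) / R, -(Real.sin (s / R)) / R, 0]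

lemma hasDerivAt_e3 {f₀ f₁ f₂ : ℝ → ℝ} {a b c x : ℝ}
    (h₀ : HasDerivAt f₀ a x) (h₁ : HasDerivAt f₁ b x) (h₂ : HasDerivAt f₂ c x) :
    HasDerivAt (fun s => (WithLp.equiv 2 (Fin 3 → ℝ)).symm ![f₀ s, f₁ s, f₂ s])
      ((WithLp.equiv 2 (Fin 3 → ℝ)).symm ![a, b, c]) x := by
  have hp : HasDerivAt (fun s => (![f₀ s, f₁ s, f₂ s] : Fin 3 → ℝ)) ![a, b, c] x := by
    apply hasDerivAt_pi.2
    intro i; fin_cases i <;> simpa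
  exact (PiLp.continuousLinearEquiv 2 ℝ (fun _ : Fin 3 => ℝ)).symm.hasFDerivAt.comp_hasDerivAt x hp

lemma hasDerivAt_div_const' (x R : ℝ) : HasDerivAt (fun s => s / R) (1 / R) x := by
  simpa using (hasDerivAt_id x).div_const R

lemma hasDerivAt_xR {R : ℝ} (hR : R ≠ 0) (s t : ℝ) :
    HasDerivAt (fun s' => xR R s' t) (aR R s) s := by
  apply hasDerivAt_e3
  · have := ((Real.hasDerivAt_cos (s / R)).comp s (hasDerivAt_div_const' s R)).const_mul R
    refine this.congr_deriv ?_
    first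
    | (field_simp; ring)
    | field_simp
  · have := ((Real.hasDerivAt_sin (s / R)).comp s (hasDerivAt_div_const' s R)).const_mul R
    refine this.congr_deriv ?_
    first
    | (field_simp; ring)
    | field_simp
  · exact hasDerivAt_const s (t / R)

lemma hasDerivAt_aR {R : ℝ} (hR : R ≠ 0) (s : ℝ) :
    HasDerivAt (fun s' => aR R s') (bR R s) s := by
  apply hasDerivAt_e3
  · have := ((Real.hasDerivAt_sin (s / R)).comp s (hasDerivAt_div_const' s R)).neg
    refine this.congr_deriv ?_
    field_simp
  · have := (Real.hasDerivAt_cos (s / R)).comp s (hasDerivAt_div_const' s R)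
    refine this.congr_deriv ?_
    field_simp
  · exact hasDerivAt_const s 0

lemma hasDerivAt_bR {R : ℝ} (hR : R ≠ 0) (s : ℝ) :
    HasDerivAt (fun s' => bR R s') ((-(1 / R ^ 2) : ℝ) • aR R s) s := by
  have h := hasDerivAt_e3 (x := s)
    (f₀ := fun s' => -(Real.cos (s' / R)) / R) (f₁ := fun s' => -(Real.sin (s' / R)) / R)
    (f₂ := fun _ => (0:ℝ))
    (a := Real.sin (s / R) / R ^ 2) (b := -(Real.cos (s / R)) / R ^ 2) (c := 0)
    ?_ ?_ (hasDerivAt_const s 0)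
  · refine h.congr_deriv ?_
    ext i
    fin_cases i <;> simp [aR] <;> ring
  · have := (((Real.hasDerivAt_cos (s / R)).comp s (hasDerivAt_div_const' s R)).neg).div_const R
    refine this.congr_deriv ?_
    field_simp
  · have := (((Real.hasDerivAt_sin (s / R)).comp s (hasDerivAt_div_const' s R)).neg).div_const R
    refine this.congr_deriv ?_
    field_simp

lemma pd1_xR {R : ℝ} (hR : R ≠ 0) (s t : ℝ) : pd1 (xR R) s t = aR R s :=
  (hasDerivAt_xR hR s t).deriv

lemma pd1_pd1_xR {R : ℝ} (hR : R ≠ 0) (s t : ℝ) : pd1 (pd1 (xR R)) s t = bR R s := by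
  have he : (fun s' => pd1 (xR R) s' t) = fun s' => aR R s' :=
    funext fun s' => pd1_xR hR s' t
  rw [pd1, he, (hasDerivAt_aR hR s).deriv]

/-! ### Parametric integral -/


lemma hasDerivAt_param_integral {H D : ℝ → ℝ → ℝ} {L : ℝ} (hL : 0 < L)
    (contH : Continuous fun p : ℝ × ℝ => H p.1 p.2)
    (contD : Continuous fun p : ℝ × ℝ => D p.1 p.2)
    (hpt : ∀ s x : ℝ, HasDerivAt (fun x' => H s x') (D s x) x) (t : ℝ) :
    HasDerivAt (fun t' => ∫ s in (0:ℝ)..L, H s t') (∫ s in (0:ℝ)..L, D s t) t := by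
  obtain ⟨C, hC⟩ : ∃ C, ∀ p ∈ Set.Icc (0:ℝ) L ×ˢ Set.Icc (t-1) (t+1), ‖D p.1 p.2‖ ≤ C :=
    (isCompact_Icc.prod isCompact_Icc).exists_bound_of_continuousOn contD.continuousOn
  have hball : ∀ x ∈ Metric.ball t 1, x ∈ Set.Icc (t-1) (t+1) := by
    intro x hx
    have h1 : |x - t| < 1 := by simpa [Real.dist_eq] using hx
    have h2 := abs_lt.1 h1
    constructor <;> linarith [h2.1, h2.2]
  have hmem : ∀ s' ∈ Set.uIoc (0:ℝ) L, s' ∈ Set.Icc (0:ℝ) L := by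
    intro s' hs'
    rw [Set.uIoc_of_le hL.le] at hs'
    exact ⟨hs'.1.le, hs'.2⟩
  have contSl : ∀ (g : ℝ → ℝ → ℝ), (Continuous fun p : ℝ × ℝ => g p.1 p.2) →
      ∀ x : ℝ, Continuous fun s => g s x := fun g hg x =>
    hg.comp (continuous_id.prodMk continuous_const)
  have key := intervalIntegral.hasDerivAt_integral_of_dominated_loc_of_deriv_le
    (μ := volume) (F := fun x s => H s x) (F' := fun x s => D s x) (x₀ := t)
    (a := 0) (b := L) (bound := fun _ => C) (s := Metric.ball t 1) (Metric.ball_mem_nhds t zero_lt_one)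
    (Filter.Eventually.of_forall fun x => (contSl _ contH x).aestronglyMeasurable)
    ((contSl _ contH t).intervalIntegrable 0 L)
    ((contSl _ contD t).aestronglyMeasurable)
    (Filter.Eventually.of_forall fun s' hs' x hx => hC (s', x) ⟨hmem s' hs', hball x hx⟩)
    intervalIntegrable_const
    (Filter.Eventually.of_forall fun s' _ x _ => hpt s' x)
  exact key.2


lemma cont_param_integral {D : ℝ → ℝ → ℝ} (L : ℝ)
    (contD : Continuous fun p : ℝ × ℝ => D p.1 p.2) :
    Continuous fun t : ℝ => ∫ s in (0:ℝ)..L, D s t := by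
  have hunc : Continuous (Function.uncurry fun (t s : ℝ) => D s t) :=
    contD.comp (continuous_snd.prodMk continuous_fst)
  exact intervalIntegral.continuous_parametric_intervalIntegral_of_continuous' hunc 0 L

/-! ### Main theorem -/

set_option maxHeartbeats 2000000 in
/-- conservation of `E(φ(t)) = ‖φ_ss‖² - (1/R²)‖φ_s‖²`. -/
theorem energy_conserved (R L : ℝ) (hR : 0 < R) (hL : 0 < L) (φ : ℝ → ℝ → E3)
    (hsmooth : ContDiff ℝ (⊤ : ℕ∞) (fun p : ℝ × ℝ => φ p.1 p.2))
    (heq : ∀ s ∈ Set.Ioo (0:ℝ) L, ∀ t : ℝ, 0 < t →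
      pd2 φ s t = cross (pd1 φ s t) (pd1 (pd1 φ) s t)
        + cross (pd1 (xR R) s t) (pd1 (pd1 φ) s t)
        + cross (pd1 φ s t) (pd1 (pd1 (xR R)) s t))
    (hbc : ∀ t : ℝ, 0 ≤ t → pd1 φ 0 t = 0 ∧ pd1 φ L t = 0) :
    ∀ t₁ t₂ : ℝ, 0 ≤ t₁ → 0 ≤ t₂ →
      ((∫ s in (0:ℝ)..L, ‖pd1 (pd1 φ) s t₁‖ ^ 2)
          - (1 / R ^ 2) * ∫ s in (0:ℝ)..L, ‖pd1 φ s t₁‖ ^ 2)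
        = ((∫ s in (0:ℝ)..L, ‖pd1 (pd1 φ) s t₂‖ ^ 2)
          - (1 / R ^ 2) * ∫ s in (0:ℝ)..L, ‖pd1 φ s t₂‖ ^ 2) := by
  intro t₁ t₂ ht₁ ht₂
  have hRne : R ≠ 0 := hR.ne'
  -- smoothness of all iterated partial derivatives
  have hu : ContDiff ℝ (⊤ : ℕ∞) (fun p : ℝ × ℝ => pd1 φ p.1 p.2) := contDiff_pd1 hsmooth
  have hv : ContDiff ℝ (⊤ : ℕ∞) (fun p : ℝ × ℝ => pd1 (pd1 φ) p.1 p.2) := contDiff_pd1 hu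
  have hF : ContDiff ℝ (⊤ : ℕ∞) (fun p : ℝ × ℝ => pd2 φ p.1 p.2) := contDiff_pd2 hsmooth
  have hFs : ContDiff ℝ (⊤ : ℕ∞) (fun p : ℝ × ℝ => pd1 (pd2 φ) p.1 p.2) := contDiff_pd1 hF
  have hFss : ContDiff ℝ (⊤ : ℕ∞) (fun p : ℝ × ℝ => pd1 (pd1 (pd2 φ)) p.1 p.2) := contDiff_pd1 hFs
  -- Clairaut
  have hC1 : ∀ s t : ℝ, pd1 (pd2 φ) s t = pd2 (pd1 φ) s t := pd_comm hsmooth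
  have hC2 : ∀ s t : ℝ, pd2 (pd1 (pd1 φ)) s t = pd1 (pd1 (pd2 φ)) s t := by
    intro s t
    rw [(pd_comm hu s t).symm]
    have he : (fun s' => pd2 (pd1 φ) s' t) = fun s' => pd1 (pd2 φ) s' t :=
      funext fun s' => (hC1 s' t).symm
    rw [pd1, he]; rfl
  -- the energy and its candidate derivative integrand
  set EE : ℝ → ℝ :=
    fun t => ∫ s in (0:ℝ)..L, (‖pd1 (pd1 φ) s t‖ ^ 2 - 1 / R ^ 2 * ‖pd1 φ s t‖ ^ 2)
    with hEEdef
  set DD : ℝ → ℝ → ℝ := fun s t =>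
    2 * ⟪pd1 (pd1 φ) s t, pd1 (pd1 (pd2 φ)) s t⟫
      - 2 / R ^ 2 * ⟪pd1 φ s t, pd1 (pd2 φ) s t⟫
    with hDDdef
  -- continuity facts
  have contH : Continuous (fun p : ℝ × ℝ =>
      ‖pd1 (pd1 φ) p.1 p.2‖ ^ 2 - 1 / R ^ 2 * ‖pd1 φ p.1 p.2‖ ^ 2) :=
    ((hv.continuous.norm.pow 2).sub (continuous_const.mul (hu.continuous.norm.pow 2)))
  have contDD : Continuous (fun p : ℝ × ℝ => DD p.1 p.2) := by
    rw [hDDdef]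
    exact (continuous_const.mul (hv.continuous.inner hFss.continuous)).sub
      (continuous_const.mul (hu.continuous.inner hFs.continuous))
  have contSlice : ∀ (g : ℝ → ℝ → ℝ), Continuous (fun p : ℝ × ℝ => g p.1 p.2) →
      ∀ t : ℝ, Continuous fun s => g s t := by
    intro g hg t
    exact hg.comp (continuous_id.prodMk continuous_const)
  -- pointwise time derivative of the integrand
  have hpt : ∀ s x : ℝ,
      HasDerivAt (fun x' => ‖pd1 (pd1 φ) s x'‖ ^ 2 - 1 / R ^ 2 * ‖pd1 φ s x'‖ ^ 2)
        (DD s x) x := by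
    intro s x
    have e1 : (fun x' => ‖pd1 (pd1 φ) s x'‖ ^ 2 - 1 / R ^ 2 * ‖pd1 φ s x'‖ ^ 2)
        = fun x' => ⟪pd1 (pd1 φ) s x', pd1 (pd1 φ) s x'⟫
            - 1 / R ^ 2 * ⟪pd1 φ s x', pd1 φ s x'⟫ := by
      funext x'
      rw [real_inner_self_eq_norm_sq, real_inner_self_eq_norm_sq]
    rw [e1]
    have h1 := HasDerivAt.inner (𝕜 := ℝ) (hasDerivAt_slice2 hv s x) (hasDerivAt_slice2 hv s x)
    have h2 := HasDerivAt.inner (𝕜 := ℝ) (hasDerivAt_slice2 hu s x) (hasDerivAt_slice2 hu s x)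
    have h3 := h1.sub (h2.const_mul (1 / R ^ 2))
    refine h3.congr_deriv ?_
    rw [hDDdef]
    simp only
    rw [← hC2 s x, ← hC1 s x,
      real_inner_comm (pd1 (pd1 φ) s x) (pd2 (pd1 (pd1 φ)) s x),
      real_inner_comm (pd1 (pd2 φ) s x) (pd1 φ s x)]
    ring
  -- Step A: differentiation under the integral sign
  have hEderiv : ∀ t : ℝ, HasDerivAt EE (∫ s in (0:ℝ)..L, DD s t) t := fun t =>
    hasDerivAt_param_integral hL contH contDD hpt t
  -- boundary vanishing of the commuted derivative
  have hFs_bd : ∀ t : ℝ, 0 < t → ∀ s₀ : ℝ, (∀ t' : ℝ, 0 ≤ t' → pd1 φ s₀ t' = 0) →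
      pd1 (pd2 φ) s₀ t = 0 := by
    intro t ht s₀ h0
    rw [hC1 s₀ t]
    have hev : (fun t' => pd1 φ s₀ t') =ᶠ[nhds t] fun _ => (0:E3) := by
      filter_upwards [Ioi_mem_nhds ht] with t' ht'
      exact h0 t' ht'.le
    rw [pd2, hev.deriv_eq, deriv_const]
  -- Step B: the derivative of the energy vanishes for positive times
  have hDzero : ∀ t : ℝ, 0 < t → (∫ s in (0:ℝ)..L, DD s t) = 0 := by
    intro t ht
    have hderiv : ∀ s ∈ Set.Ioo (0:ℝ) L,
        HasDerivAt (fun s' => 2 * ⟪pd1 (pd1 φ) s' t, pd1 (pd2 φ) s' t⟫) (DD s t) s := by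
      intro s hs
      -- the spatial derivative of pd2 φ on the open interval
      have hkey : pd1 (pd2 φ) s t
          = cross (pd1 φ s t) (pd1 (pd1 (pd1 φ)) s t)
            + cross (aR R s) (pd1 (pd1 (pd1 φ)) s t)
            + (-(1 / R ^ 2) : ℝ) • cross (pd1 φ s t) (aR R s) := by
        have hev : (fun s' => pd2 φ s' t) =ᶠ[nhds s]
            (fun s' => cross (pd1 φ s' t) (pd1 (pd1 φ) s' t)
              + cross (aR R s') (pd1 (pd1 φ) s' t)
              + cross (pd1 φ s' t) (bR R s')) := by
          filter_upwards [Ioo_mem_nhds hs.1 hs.2] with s' hs'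
          rw [heq s' hs' t ht, pd1_xR hRne, pd1_pd1_xR hRne]
        rw [pd1, hev.deriv_eq]
        have hd : HasDerivAt (fun s'' => cross (pd1 φ s'' t) (pd1 (pd1 φ) s'' t)
            + cross (aR R s'') (pd1 (pd1 φ) s'' t)
            + cross (pd1 φ s'' t) (bR R s''))
            ((cross (pd1 (pd1 φ) s t) (pd1 (pd1 φ) s t)
                + cross (pd1 φ s t) (pd1 (pd1 (pd1 φ)) s t))
              + (cross (bR R s) (pd1 (pd1 φ) s t)
                + cross (aR R s) (pd1 (pd1 (pd1 φ)) s t))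
              + (cross (pd1 (pd1 φ) s t) (bR R s)
                + cross (pd1 φ s t) ((-(1 / R ^ 2) : ℝ) • aR R s))) s :=
          (((hasDerivAt_slice1 hu s t).cross' (hasDerivAt_slice1 hv s t)).add
            ((hasDerivAt_aR hRne s).cross' (hasDerivAt_slice1 hv s t))).add
            ((hasDerivAt_slice1 hu s t).cross' (hasDerivAt_bR hRne s))
        rw [hd.deriv, crossE3_self, cross_smul_right,
          crossE3_anticomm (pd1 (pd1 φ) s t) (bR R s)]
        abel
      have h1 := HasDerivAt.inner (𝕜 := ℝ) (hasDerivAt_slice1 hv s t) (hasDerivAt_slice1 hFs s t)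
      have h2 := h1.const_mul (2:ℝ)
      refine h2.congr_deriv ?_
      rw [hDDdef]
      simp only
      rw [hkey]
      rw [inner_add_right, inner_add_right, inner_add_right, inner_add_right]
      rw [real_inner_smul_right, real_inner_smul_right]
      rw [inner_cross_left, inner_cross_right,
        inner_cross_cyclic (pd1 φ s t) (aR R s) (pd1 (pd1 (pd1 φ)) s t)]
      rw [inner_cross_left (pd1 φ s t) (aR R s),
        inner_cross_right (aR R s) (pd1 (pd1 (pd1 φ)) s t)]
      field_simp
      ring
    have hgL : pd1 (pd2 φ) L t = 0 := hFs_bd t ht L (fun t' ht' => (hbc t' ht').2)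
    have hg0 : pd1 (pd2 φ) 0 t = 0 := hFs_bd t ht 0 (fun t' ht' => (hbc t' ht').1)
    have hcont : ContinuousOn (fun s' => 2 * ⟪pd1 (pd1 φ) s' t, pd1 (pd2 φ) s' t⟫)
        (Set.Icc (0:ℝ) L) := by
      have hc2 : Continuous fun p : ℝ × ℝ =>
          (⟪pd1 (pd1 φ) p.1 p.2, pd1 (pd2 φ) p.1 p.2⟫ : ℝ) :=
        hv.continuous.inner hFs.continuous
      exact (continuous_const.mul
        (contSlice (fun a b => (⟪pd1 (pd1 φ) a b, pd1 (pd2 φ) a b⟫ : ℝ)) hc2 t)).continuousOn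
    have := intervalIntegral.integral_eq_sub_of_hasDerivAt_of_le hL.le hcont hderiv
      ((contSlice _ contDD t).intervalIntegrable 0 L)
    rw [this, hgL, hg0]
    simp
  -- Step C: the derivative also vanishes at t = 0, by continuity
  have hDcont : Continuous fun t : ℝ => ∫ s in (0:ℝ)..L, DD s t :=
    cont_param_integral L contDD
  have hD0 : ∀ t : ℝ, 0 ≤ t → (∫ s in (0:ℝ)..L, DD s t) = 0 := by
    intro t ht
    rcases ht.lt_or_eq with h | h
    · exact hDzero t h
    · subst h
      have h1 : Filter.Tendsto (fun t' => ∫ s in (0:ℝ)..L, DD s t')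
          (nhdsWithin 0 (Set.Ioi 0)) (nhds (∫ s in (0:ℝ)..L, DD s 0)) :=
        (hDcont.tendsto 0).mono_left nhdsWithin_le_nhds
      have h2 : (fun t' => ∫ s in (0:ℝ)..L, DD s t') =ᶠ[nhdsWithin 0 (Set.Ioi 0)]
          fun _ => (0:ℝ) := by
        filter_upwards [self_mem_nhdsWithin] with x hx
        exact hDzero x hx
      exact tendsto_nhds_unique (h1.congr' h2) tendsto_const_nhds
  -- Step D: the energy is constant on [0, ∞)
  have hconst : ∀ a b : ℝ, 0 ≤ a → a ≤ b → EE b = EE a := by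
    intro a b ha hab
    have hcont : ContinuousOn EE (Set.Icc a b) := fun x _ =>
      ((hEderiv x).differentiableAt.continuousAt).continuousWithinAt
    have hd : ∀ x ∈ Set.Ico a b, HasDerivWithinAt EE 0 (Set.Ici x) x := by
      intro x hx
      have h1 := hEderiv x
      rw [hD0 x (ha.trans hx.1)] at h1
      exact h1.hasDerivWithinAt
    exact constant_of_has_deriv_right_zero hcont hd b (Set.right_mem_Icc.2 hab)
  -- conclusion
  have hsplit : ∀ t : ℝ, EE t
      = (∫ s in (0:ℝ)..L, ‖pd1 (pd1 φ) s t‖ ^ 2)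
        - 1 / R ^ 2 * ∫ s in (0:ℝ)..L, ‖pd1 φ s t‖ ^ 2 := by
    intro t
    have i1 : IntervalIntegrable (fun s => ‖pd1 (pd1 φ) s t‖ ^ 2) volume 0 L :=
      ((hv.continuous.comp (continuous_id.prodMk continuous_const)).norm.pow 2).intervalIntegrable 0 L
    have i2 : IntervalIntegrable (fun s => 1 / R ^ 2 * ‖pd1 φ s t‖ ^ 2) volume 0 L :=
      (continuous_const.mul
        ((hu.continuous.comp (continuous_id.prodMk continuous_const)).norm.pow 2)).intervalIntegrable 0 L
    simp only [hEEdef]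
    rw [intervalIntegral.integral_sub i1 i2, intervalIntegral.integral_const_mul]
  have h12 : EE t₁ = EE t₂ := by
    rcases le_total t₁ t₂ with h | h
    · exact (hconst t₁ t₂ ht₁ h).symm
    · exact hconst t₂ t₁ ht₂ h
  rw [← hsplit t₁, ← hsplit t₂]
  exact h12
end
end

section
/- For R > 0, θ ∈ (0, π), n ∈ ℕ₊ and R_n = Rθ/(2πn + θ), the curve x_n(s,t) = (R_n cos(s/R_n), R_n sin(s/R_n), t/R_n) solves the LIE x_t = x_s × x_ss, satisfies |∂_s x_n| = 1, and its third component satisfies |x_{n,3}(s,t) − x^R_3(s,t)| = (2πn/(Rθ)) t for all s ∈ (0, θR) and t ≥ 0, where x^R(s,t) = (R cos(s/R), R sin(s/R), t/R). -/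
open MeasureTheory RealInnerProductSpace

noncomputable section

/-!
`xR r` is the circle of radius `r`, traversed at unit speed and moving vertically with speed
`1 / r`; its curvature vector `x_ss` is `-x / r²` horizontally, so `x_s × x_ss` is the vertical
vector `(0, 0, 1 / r) = x_t`. The rates of the two circles differ by `1 / R_n - 1 / R = 2πn / (Rθ)`.
-/

open Real WithLp

theorem hasDerivAt_toLp {𝕜 ι : Type*} [NontriviallyNormedField 𝕜] [Fintype ι]
    (p : ENNReal) [Fact (1 ≤ p)] {g : 𝕜 → ι → 𝕜} {g' : ι → 𝕜} {x : 𝕜}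
    (hg : ∀ i, HasDerivAt (fun y => g y i) (g' i) x) :
    HasDerivAt (fun y => toLp p (g y)) (toLp p g') x :=
  (PiLp.continuousLinearEquiv p 𝕜 (fun _ : ι => 𝕜)).symm.hasFDerivAt.comp_hasDerivAt x
    (hasDerivAt_pi.2 hg)

theorem hasDerivAt_mul_cos_div (c r s : ℝ) :
    HasDerivAt (fun s => c * cos (s / r)) (-(c * sin (s / r) / r)) s :=
  (((hasDerivAt_id s).div_const r).cos.const_mul c).congr_deriv (by simp; ring)

theorem hasDerivAt_mul_sin_div (c r s : ℝ) :
    HasDerivAt (fun s => c * sin (s / r)) (c * cos (s / r) / r) s :=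
  (((hasDerivAt_id s).div_const r).sin.const_mul c).congr_deriv (by simp; ring)

namespace xR

variable {r : ℝ}

theorem apply_two (s t : ℝ) : xR r s t 2 = t / r := rfl

theorem pd1_eq (hr : r ≠ 0) (s t : ℝ) :
    pd1 (xR r) s t = toLp 2 ![-sin (s / r), cos (s / r), 0] := by
  refine HasDerivAt.deriv (hasDerivAt_toLp 2 fun i => ?_)
  fin_cases i
  · simpa [hr] using hasDerivAt_mul_cos_div r r s
  · simpa [hr] using hasDerivAt_mul_sin_div r r s
  · simpa using hasDerivAt_const s (t / r)

theorem pd1_pd1_eq (hr : r ≠ 0) (s t : ℝ) :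
    pd1 (pd1 (xR r)) s t = toLp 2 ![-(cos (s / r) / r), -(sin (s / r) / r), 0] := by
  show deriv (fun s' => pd1 (xR r) s' t) s = _
  simp_rw [pd1_eq hr]
  refine HasDerivAt.deriv (hasDerivAt_toLp 2 fun i => ?_)
  fin_cases i
  · simpa [neg_div] using hasDerivAt_mul_sin_div (-1) r s
  · simpa using hasDerivAt_mul_cos_div 1 r s
  · simpa using hasDerivAt_const s (0 : ℝ)

theorem pd2_eq (s t : ℝ) : pd2 (xR r) s t = toLp 2 ![0, 0, 1 / r] := by
  refine HasDerivAt.deriv (hasDerivAt_toLp 2 fun i => ?_)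
  fin_cases i
  · simpa using hasDerivAt_const t (r * cos (s / r))
  · simpa using hasDerivAt_const t (r * sin (s / r))
  · simpa using (hasDerivAt_id t).div_const r

theorem pd2_eq_cross (hr : r ≠ 0) (s t : ℝ) :
    pd2 (xR r) s t = cross (pd1 (xR r) s t) (pd1 (pd1 (xR r)) s t) := by
  rw [pd2_eq, pd1_eq hr, pd1_pd1_eq hr]
  ext i
  fin_cases i <;> simp [cross]
  -- only the third component is left: `1 / r = (sin² + cos²) / r`
  field_simp
  linear_combination -sin_sq_add_cos_sq (s / r)

theorem norm_pd1 (hr : r ≠ 0) (s t : ℝ) : ‖pd1 (xR r) s t‖ = 1 := by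
  simp [pd1_eq hr, EuclideanSpace.norm_eq, Fin.sum_univ_three]

end xR

theorem div_div_sub_div (t c R : ℝ) {θ : ℝ} (hθ : θ ≠ 0) :
    t / (R * θ / (c + θ)) - t / R = c / (R * θ) * t := by
  field_simp
  ring

theorem optimality_of_linear_growth_general (R θ : ℝ) (hR : 0 < R) (hθ : θ ∈ Set.Ioo 0 Real.pi)
    (n : ℕ) :
    let Rn : ℝ := R * θ / (2 * Real.pi * n + θ)
    let xn : ℝ → ℝ → E3 := xR Rn
    (∀ s t : ℝ, pd2 xn s t = cross (pd1 xn s t) (pd1 (pd1 xn) s t)) ∧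
    (∀ s t : ℝ, ‖pd1 xn s t‖ = 1) ∧
    (∀ s ∈ Set.Ioo (0:ℝ) (θ * R), ∀ t : ℝ, 0 ≤ t →
      |xn s t 2 - xR R s t 2| = (2 * Real.pi * n / (R * θ)) * t) := by
  intro Rn xn
  have hθ0 : 0 < θ := hθ.1
  have hRn : Rn ≠ 0 := by positivity
  refine ⟨xR.pd2_eq_cross hRn, xR.norm_pd1 hRn, fun s _ t ht => ?_⟩
  rw [xR.apply_two, xR.apply_two, div_div_sub_div t _ R hθ0.ne', abs_of_nonneg (by positivity)]

/-- the looped arc gives the optimal linear growth rate. -/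
theorem optimality_of_linear_growth (R θ : ℝ) (hR : 0 < R) (hθ : θ ∈ Set.Ioo 0 Real.pi)
    (n : ℕ) (hn : 0 < n) :
    let Rn : ℝ := R * θ / (2 * Real.pi * n + θ)
    let xn : ℝ → ℝ → E3 := xR Rn
    (∀ s t : ℝ, pd2 xn s t = cross (pd1 xn s t) (pd1 (pd1 xn) s t)) ∧
    (∀ s t : ℝ, ‖pd1 xn s t‖ = 1) ∧
    (∀ s ∈ Set.Ioo (0:ℝ) (θ * R), ∀ t : ℝ, 0 ≤ t →
      |xn s t 2 - xR R s t 2| = (2 * Real.pi * n / (R * θ)) * t) :=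
  optimality_of_linear_growth_general R θ hR hθ n
end
end
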